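/- Let Σ = ℝ² ∖ {0} be the punctured plane, let X = f(x,y)(x ∂/∂x + y ∂/∂y) be a smooth radial vector field on Σ with f(x,y) > 0, and let γ be a generic immersed closed curve with base point p on Σ. Then w(γ,X) = (w(γ) − k)·g^k ∈ ℤ[π₁(Σ,p)], where w(γ) is the usual planar Whitney index of γ, k is the number of times γ circles around 0 (so [γ] = g^k), and g is the generator of π₁(Σ,p) ≅ ℤ represented by a small positively oriented loop around 0. -/

import Mathlib

/-!
The Whitney index of a based curve in the punctured plane `Σ_{0,2} = ℝ² ∖ {0} = ℂ ∖ {0}`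
relative to a radial vector field:  `w(γ,X) = (w(γ) − k)·g^k ∈ ℤ[π₁(Σ,p)]`.
Winding quantities are expressed via continuous argument lifts; the class `g^k` is realized
as the class of the loop `t ↦ p·e^{2πikt}` going `k` times positively around the puncture,
and `ℤ[π₁(Σ,p)]` as the free `ℤ`-module `(Path.Homotopic.Quotient p p) →₀ ℤ`.
-/

open Complex

noncomputable section

/-- The punctured plane `ℝ² ∖ {0}`, identified with `ℂ ∖ {0}`. -/
abbrev PuncturedPlane : Type := {z : ℂ // z ≠ 0}

/-- Reparametrized restriction of a curve to `[a,b]`, as a `Path`. -/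
def seg {A : Type*} [TopologicalSpace A] (γ : ℝ → A) (hγ : Continuous γ) (a b : ℝ) :
    Path (γ a) (γ b) where
  toFun s := γ (a + (b - a) * s)
  continuous_toFun := by fun_prop
  source' := by simp
  target' := by simp

/-- The homotopy class of the whole based loop `γ`. -/
def loopClass {A : Type*} [TopologicalSpace A] (γ : ℝ → A) (hγ : Continuous γ) (p : A)
    (h0 : γ 0 = p) (h1 : γ 1 = p) : Path.Homotopic.Quotient p p :=
  ⟦(seg γ hγ 0 1).cast h0.symm h1.symm⟧

/-- The loop going `k` times positively around the puncture (through `p`);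
its homotopy class is `g^k`, where `g` is the positive generator of `π₁(ℂ ∖ {0}, p)`. -/
def circlesLoop (p : PuncturedPlane) (k : ℤ) : Path p p where
  toFun t := ⟨p.1 * Complex.exp (2 * Real.pi * k * t * Complex.I), by
    simp [p.2, Complex.exp_ne_zero]⟩
  continuous_toFun := by
    apply Continuous.subtype_mk
    fun_prop
  source' := by
    apply Subtype.ext
    simp
  target' := by
    apply Subtype.ext
    have : (2 * (Real.pi : ℂ) * (k : ℂ) * (1 : ℝ) * Complex.I)
        = (k : ℤ) * (2 * (Real.pi : ℂ) * Complex.I) := by push_cast; ring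
    simp only [Set.Icc.coe_one]
    rw [this, Complex.exp_int_mul_two_pi_mul_I]
    simp


/-- A convex combination of two positive reals is positive. -/
lemma convexComb_pos {a x y : ℝ} (h0 : 0 ≤ a) (h1 : a ≤ 1) (hx : 0 < x) (hy : 0 < y) :
    0 < (1 - a) * x + a * y := by
  have hm : 0 < min x y := lt_min hx hy
  have hle1 : (1 - a) * min x y ≤ (1 - a) * x :=
    mul_le_mul_of_nonneg_left (min_le_left x y) (by linarith)
  have hle2 : a * min x y ≤ a * y := mul_le_mul_of_nonneg_left (min_le_right x y) h0
  nlinarith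

/-- A continuous function on `[0,1]` taking values in `2πℤ` takes equal values at `0` and `1`. -/
lemma lift_diff_const {d : ℝ → ℝ} (hd : ContinuousOn d (Set.Icc 0 1))
    (hval : ∀ t ∈ Set.Icc (0:ℝ) 1, ∃ n : ℤ, d t = 2 * Real.pi * n) : d 1 = d 0 := by
  obtain ⟨n0, hn0⟩ := hval 0 (by constructor <;> norm_num)
  obtain ⟨n1, hn1⟩ := hval 1 (by constructor <;> norm_num)
  have hpi := Real.pi_pos
  rcases lt_trichotomy n0 n1 with h | h | h
  · exfalso
    have hmem : 2 * Real.pi * n0 + Real.pi ∈ Set.Icc (d 0) (d 1) := by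
      rw [hn0, hn1]
      constructor
      · nlinarith
      · have : (n0 : ℝ) + 1 ≤ n1 := by exact_mod_cast h
        nlinarith
    obtain ⟨c, hc, hdc⟩ := intermediate_value_Icc (by norm_num : (0:ℝ) ≤ 1) hd hmem
    obtain ⟨m, hm⟩ := hval c hc
    rw [hm] at hdc
    have : (2 * m : ℝ) = 2 * n0 + 1 := by
      have hcancel : Real.pi * (2 * m) = Real.pi * (2 * n0 + 1) := by linarith
      exact mul_left_cancel₀ (ne_of_gt hpi) hcancel
    have : (2 * m : ℤ) = 2 * n0 + 1 := by exact_mod_cast this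
    omega
  · rw [hn0, hn1, h]
  · exfalso
    have hmem : 2 * Real.pi * n1 + Real.pi ∈ Set.Icc (d 1) (d 0) := by
      rw [hn0, hn1]
      constructor
      · nlinarith
      · have : (n1 : ℝ) + 1 ≤ n0 := by exact_mod_cast h
        nlinarith
    obtain ⟨c, hc, hdc⟩ := intermediate_value_Icc' (by norm_num : (0:ℝ) ≤ 1) hd hmem
    obtain ⟨m, hm⟩ := hval c hc
    rw [hm] at hdc
    have : (2 * m : ℝ) = 2 * n1 + 1 := by
      have hcancel : Real.pi * (2 * m) = Real.pi * (2 * n1 + 1) := by linarith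
      exact mul_left_cancel₀ (ne_of_gt hpi) hcancel
    have : (2 * m : ℤ) = 2 * n1 + 1 := by exact_mod_cast this
    omega

/-- **Whitney index relative to a radial field on the punctured plane**
(Example `Ex:Radial2`):  `w(γ,X) = (w(γ) − k)·g^k` in `ℤ[π₁(Σ_{0,2},p)]`, where `w(γ)` is
the planar Whitney index of `γ`, `k` is the number of times `γ` circles around `0` (so that
`[γ] = g^k`), and `g` is the generator of `π₁` given by a small positive loop around `0`. -/
theorem whitney_index_radial_field
    -- the radial vector field `X = f·(x ∂/∂x + y ∂/∂y)`, `f > 0`, on `ℂ ∖ {0}`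
    (f : ℂ → ℝ) (hf_smooth : ContDiff ℝ (⊤ : ℕ∞) f) (hf_pos : ∀ z : ℂ, z ≠ 0 → 0 < f z)
    (X : ℂ → ℂ) (hX : ∀ z : ℂ, X z = (f z : ℂ) * z)
    -- the curve: a generic immersion `γ : [0,1] → ℂ ∖ {0}` with `γ(0) = γ(1) = p`
    (γ : ℝ → ℂ) (hγ0 : ∀ t, γ t ≠ 0) (p : PuncturedPlane)
    (hγ_smooth : ContDiff ℝ (⊤ : ℕ∞) γ)
    (h0 : γ 0 = p.1) (h1 : γ 1 = p.1)
    (hclosed : deriv γ 0 = deriv γ 1)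
    (himm : ∀ t, t ∈ Set.Icc (0:ℝ) 1 → deriv γ t ≠ 0)
    -- genericity: only transversal double points, distinct from the base point
    (k : ℕ) (u v : Fin k → ℝ)
    (huv : ∀ i, γ (u i) = γ (v i))
    (huv_range : ∀ i, 0 < u i ∧ u i < v i ∧ v i < 1)
    (huv_p : ∀ i, γ (u i) ≠ p.1)
    (huv_trans : ∀ i, (starRingEnd ℂ (deriv γ (u i)) * deriv γ (v i)).im ≠ 0)
    (huv_inj : Function.Injective fun i => (u i, v i))
    (huv_all : ∀ s t : ℝ, 0 ≤ s → s < t → t < 1 → γ s = γ t → ∃ i, u i = s ∧ v i = t)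
    (hno_triple : ∀ i j, i ≠ j → γ (u i) ≠ γ (u j))
    -- a continuous argument lift `θ` of the tangent direction `γ'`
    (θ : ℝ → ℝ) (hθ : ContinuousOn θ (Set.Icc 0 1))
    (hθ_lift : ∀ t ∈ Set.Icc (0:ℝ) 1,
      deriv γ t = (‖deriv γ t‖ : ℂ) * Complex.exp (θ t * Complex.I))
    -- a continuous argument lift `ψ` of `X ∘ γ`
    (ψ : ℝ → ℝ) (hψ : ContinuousOn ψ (Set.Icc 0 1))
    (hψ_lift : ∀ t ∈ Set.Icc (0:ℝ) 1,
      X (γ t) = (‖X (γ t)‖ : ℂ) * Complex.exp (ψ t * Complex.I))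
    -- a continuous argument lift `φ` of `γ` itself
    (φ : ℝ → ℝ) (hφ : ContinuousOn φ (Set.Icc 0 1))
    (hφ_lift : ∀ t ∈ Set.Icc (0:ℝ) 1,
      γ t = (‖γ t‖ : ℂ) * Complex.exp (φ t * Complex.I))
    -- `w(γ,X)`: the number of rotations of `γ'` relative to `X`
    (wX : ℤ) (hwX : (θ 1 - ψ 1) - (θ 0 - ψ 0) = 2 * Real.pi * wX)
    -- `w(γ)`: the planar Whitney index of `γ`
    (w : ℤ) (hw : θ 1 - θ 0 = 2 * Real.pi * w)
    -- `k₀`: the number of times `γ` circles around `0`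
    (k₀ : ℤ) (hk₀ : φ 1 - φ 0 = 2 * Real.pi * k₀) :
    -- w(γ,X) = w(γ,X)·[γ] = (w(γ) − k)·g^k   in ℤ[π₁(Σ_{0,2}, p)]
    Finsupp.single
        (loopClass (fun t => (⟨γ t, hγ0 t⟩ : PuncturedPlane))
          (hγ_smooth.continuous.subtype_mk hγ0) p (Subtype.ext h0) (Subtype.ext h1))
        wX
      = Finsupp.single (⟦circlesLoop p k₀⟧ : Path.Homotopic.Quotient p p) (w - k₀) := by
  -- ## Step 1: `ψ` and `φ` differ by a constant, so `ψ 1 - ψ 0 = 2π k₀`.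
  have hπ := Real.pi_pos
  have habs : ∀ t, 0 < ‖γ t‖ := fun t => by
    simpa using (norm_pos_iff.mpr (hγ0 t))
  have hsame : ∀ t ∈ Set.Icc (0:ℝ) 1, ∃ n : ℤ, ψ t - φ t = 2 * Real.pi * n := by
    intro t ht
    have hfpos := hf_pos (γ t) (hγ0 t)
    have hXabs : (‖X (γ t)‖ : ℂ) = (f (γ t) : ℂ) * (‖γ t‖ : ℂ) := by
      rw [hX, norm_mul, Complex.norm_real, Real.norm_of_nonneg hfpos.le, Complex.ofReal_mul]
    have h1x := hψ_lift t ht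
    rw [hXabs, hX] at h1x
    have h2x := hφ_lift t ht
    have hexp : Complex.exp ((ψ t : ℂ) * Complex.I) = Complex.exp ((φ t : ℂ) * Complex.I) := by
      have hc : ((f (γ t) : ℂ)) * (‖γ t‖ : ℂ) ≠ 0 :=
        mul_ne_zero (by exact_mod_cast ne_of_gt hfpos) (by exact_mod_cast ne_of_gt (habs t))
      apply mul_left_cancel₀ hc
      calc ((f (γ t) : ℂ) * (‖γ t‖ : ℂ)) * Complex.exp ((ψ t : ℂ) * Complex.I)
          = (f (γ t) : ℂ) * γ t := h1x.symm
        _ = (f (γ t) : ℂ)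
              * ((‖γ t‖ : ℂ) * Complex.exp ((φ t : ℂ) * Complex.I)) := by
            rw [← h2x]
        _ = _ := by ring
    have hone : Complex.exp (((ψ t - φ t : ℝ) : ℂ) * Complex.I) = 1 := by
      rw [show (((ψ t - φ t : ℝ)) : ℂ) * Complex.I
            = (ψ t : ℂ) * Complex.I - (φ t : ℂ) * Complex.I by push_cast; ring,
          Complex.exp_sub, hexp, div_self (Complex.exp_ne_zero _)]
    rw [Complex.exp_eq_one_iff] at hone
    obtain ⟨n, hn⟩ := hone
    refine ⟨n, ?_⟩
    have hI : ((ψ t - φ t : ℝ) : ℂ) = (n : ℂ) * (2 * Real.pi) := by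
      apply mul_right_cancel₀ Complex.I_ne_zero
      rw [hn]; ring
    have := hI
    rw [show ((n : ℂ) * (2 * Real.pi)) = (((n : ℝ) * (2 * Real.pi) : ℝ) : ℂ) by push_cast; ring]
      at this
    have := Complex.ofReal_inj.mp this
    linarith [this]
  have hψk : ψ 1 - ψ 0 = 2 * Real.pi * k₀ := by
    have := lift_diff_const (hψ.sub hφ) hsame
    have h01 : ψ 1 - φ 1 = ψ 0 - φ 0 := this
    linarith [hk₀]
  -- ## Step 2: `wX = w - k₀`.
  have hwXval : wX = w - k₀ := by
    have : 2 * Real.pi * (wX : ℝ) = 2 * Real.pi * ((w : ℝ) - (k₀ : ℝ)) := by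
      rw [← hwX]; linarith [hw, hψk]
    have h2 : (wX : ℝ) = (w : ℝ) - (k₀ : ℝ) :=
      mul_left_cancel₀ (by positivity : (2 * Real.pi : ℝ) ≠ 0) this
    exact_mod_cast h2
  -- ## Step 3: the loop `γ` is homotopic to `circlesLoop p k₀`.
  have hφ0mem : (0:ℝ) ∈ Set.Icc (0:ℝ) 1 := by constructor <;> norm_num
  have hφ1mem : (1:ℝ) ∈ Set.Icc (0:ℝ) 1 := by constructor <;> norm_num
  have hp_eq : p.1 = (‖p.1‖ : ℂ) * Complex.exp ((φ 0 : ℂ) * Complex.I) := by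
    have := hφ_lift 0 hφ0mem
    rw [h0] at this
    exact this
  have hγ1_abs : ‖γ 1‖ = ‖p.1‖ := by rw [h1]
  have hγ0_abs : ‖γ 0‖ = ‖p.1‖ := by rw [h0]
  have hφ1val : φ 1 = φ 0 + 2 * Real.pi * k₀ := by linarith [hk₀]
  have hΦ : Continuous fun t : unitInterval => φ t :=
    hφ.comp_continuous continuous_subtype_val (fun x => x.2)
  have hR : Continuous fun t : unitInterval => ‖γ t‖ :=
    (continuous_norm.comp hγ_smooth.continuous).comp continuous_subtype_val
  have hpabs : 0 < ‖p.1‖ := norm_pos_iff.mpr p.2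
  -- the homotopy
  set F : unitInterval × unitInterval → ℂ := fun st =>
    ((((1 - (st.1 : ℝ)) * ‖γ st.2‖ + (st.1 : ℝ) * ‖p.1‖ : ℝ)) : ℂ)
      * Complex.exp
        ((((1 - (st.1 : ℝ)) * φ st.2
            + (st.1 : ℝ) * (φ 0 + 2 * Real.pi * k₀ * st.2) : ℝ) : ℂ) * Complex.I)
    with hF
  have hFne : ∀ st, F st ≠ 0 := by
    intro st
    apply mul_ne_zero
    · rw [Complex.ofReal_ne_zero]
      exact ne_of_gt (convexComb_pos st.1.2.1 st.1.2.2 (habs st.2) hpabs)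
    · exact Complex.exp_ne_zero _
  have hFcont : Continuous F := by
    apply Continuous.mul
    · apply Complex.continuous_ofReal.comp
      apply Continuous.add
      · exact ((continuous_const.sub (continuous_subtype_val.comp continuous_fst)).mul
          (hR.comp continuous_snd))
      · exact ((continuous_subtype_val.comp continuous_fst).mul continuous_const)
    · apply Complex.continuous_exp.comp
      apply Continuous.mul _ continuous_const
      apply Complex.continuous_ofReal.comp
      apply Continuous.add
      · exact ((continuous_const.sub (continuous_subtype_val.comp continuous_fst)).mul
          (hΦ.comp continuous_snd))
      · exact ((continuous_subtype_val.comp continuous_fst).mul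
          (continuous_const.add (continuous_const.mul
            (continuous_subtype_val.comp continuous_snd))))
  have hclass : loopClass (fun t => (⟨γ t, hγ0 t⟩ : PuncturedPlane))
        (hγ_smooth.continuous.subtype_mk hγ0) p (Subtype.ext h0) (Subtype.ext h1)
      = (⟦circlesLoop p k₀⟧ : Path.Homotopic.Quotient p p) := by
    unfold loopClass
    apply Quotient.sound
    constructor
    refine
      { toFun := fun st => ⟨F st, hFne st⟩
        continuous_toFun := hFcont.subtype_mk hFne
        map_zero_left := ?_
        map_one_left := ?_
        prop' := ?_ }
    · -- at s = 0 : the curve γ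
      intro t
      apply Subtype.ext
      show F (0, t) = γ (0 + (1 - 0) * (t : ℝ))
      have ht : (t : ℝ) ∈ Set.Icc (0:ℝ) 1 := t.2
      simp only [hF, Set.Icc.coe_zero]
      rw [show (0:ℝ) + (1 - 0) * (t : ℝ) = (t : ℝ) by ring]
      rw [hφ_lift t ht]
      norm_num
    · -- at s = 1 : the circle loop
      intro t
      apply Subtype.ext
      show F (1, t) = p.1 * Complex.exp (2 * Real.pi * (k₀ : ℂ) * (t : ℝ) * Complex.I)
      simp only [hF, Set.Icc.coe_one]
      have hcoef : ((1 - (1:ℝ)) * ‖γ t‖ + (1:ℝ) * ‖p.1‖ : ℝ)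
          = ‖p.1‖ := by ring
      have hexps : ((((1 - (1:ℝ)) * φ t + (1:ℝ) * (φ 0 + 2 * Real.pi * k₀ * t) : ℝ)) : ℂ)
            * Complex.I
          = (φ 0 : ℂ) * Complex.I + 2 * Real.pi * (k₀ : ℂ) * ((t : ℝ) : ℂ) * Complex.I := by
        push_cast; ring
      rw [hcoef, hexps, Complex.exp_add]
      conv_rhs => rw [hp_eq]
      ring
    · -- boundary fixed
      intro s x hx
      have hx' : x = 0 ∨ x = 1 := by simpa using hx
      rcases hx' with rfl | rfl
      · apply Subtype.ext
        show F (s, 0) = γ (0 + (1 - 0) * ((0 : unitInterval) : ℝ))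
        simp only [hF, Set.Icc.coe_zero]
        rw [show (0:ℝ) + (1 - 0) * (0:ℝ) = (0:ℝ) by ring]
        rw [hγ0_abs]
        rw [show (1 - (s:ℝ)) * ‖p.1‖ + (s:ℝ) * ‖p.1‖
              = ‖p.1‖ by ring]
        rw [show (1 - (s:ℝ)) * φ 0 + (s:ℝ) * (φ 0 + 2 * Real.pi * (k₀:ℝ) * 0) = φ 0 by ring]
        rw [hφ_lift 0 hφ0mem, hγ0_abs]
      · apply Subtype.ext
        show F (s, 1) = γ (0 + (1 - 0) * ((1 : unitInterval) : ℝ))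
        simp only [hF, Set.Icc.coe_one]
        rw [show (0:ℝ) + (1 - 0) * (1:ℝ) = (1:ℝ) by ring]
        rw [hγ1_abs]
        rw [show (1 - (s:ℝ)) * ‖p.1‖ + (s:ℝ) * ‖p.1‖
              = ‖p.1‖ by ring]
        rw [show (1 - (s:ℝ)) * φ 1 + (s:ℝ) * (φ 0 + 2 * Real.pi * (k₀:ℝ) * 1) = φ 1 by
          rw [hφ1val]; ring]
        rw [hφ_lift 1 hφ1mem, hγ1_abs]
  rw [hclass, hwXval]
  rfl
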